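/- arXiv:1812.05579 — 2 statements merged into one kernel-verified Lean document; each statement's English description precedes it below -/
import Mathlib

section
/- Let ψ : GL⁺ × Sym(3) → ℝ be a strain energy with ψ(·;S) continuously differentiable for every S ∈ Sym(3), with Piola–Kirchhoff stress P(F;S) (the Frobenius gradient of ψ(·;S) at F) and Cauchy stress T(F;S) = (det F)⁻¹ P(F;S) Fᵀ. Fix F₁ ∈ GL⁺ and S ∈ Sym(3), and assume the initial stress reference independence condition at the level of stresses: T(F₂F₁;S) = T(F₂; T(F₁;S)) for all F₂ ∈ GL⁺. Then there exists a constant c ∈ ℝ such that ψ(F₂F₁;S) = (det F₁)·ψ(F₂; T(F₁;S)) + c for all F₂ ∈ GL⁺. -/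
/-!
The defect `g F₂ = ψ(F₂F₁; S) - det F₁ · ψ(F₂; T(F₁; S))` has vanishing directional derivatives
on GL⁺: the ISRI relation for Cauchy stresses gives `P(F₂; T(F₁; S)) = (det F₁)⁻¹ P(F₂F₁; S) F₁ᵀ`,
and the two derivatives `tr(P(F₂F₁; S)ᵀ H F₁)` and `det F₁ · tr(P(F₂; T(F₁; S))ᵀ H)` then agree by
cyclicity of the trace. A function with vanishing directional derivatives is constant along
segments, hence locally constant, hence constant on the connected open set GL⁺.

GL⁺ is connected because every matrix of positive determinant is a positive multiple of one in
`SL(n, ℝ)`, and `SL(n, ℝ)` is generated by transvections and the matrices `diag(c, c⁻¹)`, each of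
which is joined to `1` by an explicit path.
-/

open Matrix

/-- GL⁺: the set of 3×3 real matrices with positive determinant. -/
def GLpos : Set (Matrix (Fin 3) (Fin 3) ℝ) := {F | 0 < F.det}

/-- The Cauchy stress of an initially stressed material with Piola–Kirchhoff stress `P`:
`T(F;S) = (det F)⁻¹ P(F;S) Fᵀ`. -/
noncomputable def cauchy
    (P : Matrix (Fin 3) (Fin 3) ℝ → Matrix (Fin 3) (Fin 3) ℝ → Matrix (Fin 3) (Fin 3) ℝ)
    (F S : Matrix (Fin 3) (Fin 3) ℝ) : Matrix (Fin 3) (Fin 3) ℝ :=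
  (F.det)⁻¹ • (P F S * Fᵀ)

theorem Joined.of_continuous {X : Type*} [TopologicalSpace X] {f : ℝ → X} (hf : Continuous f) :
    Joined (f 0) (f 1) :=
  joinedIn_univ.1 (JoinedIn.ofLine hf.continuousOn rfl rfl (Set.subset_univ _))

namespace Matrix.SpecialLinearGroup

variable {ι : Type*} [Fintype ι] [DecidableEq ι]

theorem joined_one_transvection {i j : ι} (hij : i ≠ j) (c : ℝ) :
    Joined 1 (transvection hij c) := by
  have hf : Continuous fun s : ℝ => transvection hij (s * c) := by
    refine Continuous.subtype_mk (continuous_const.add (continuous_matrix fun a b => ?_)) _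
    simp only [single_apply]
    split_ifs <;> fun_prop
  simpa [transvection_coeff_zero] using Joined.of_continuous hf

theorem joined_one_diag2n_of_pos {i j : ι} (hij : i ≠ j) {c : ℝ} (hc : 0 < c) :
    Joined 1 (diag2n hij c hc.ne') := by
  have hf : Continuous fun s : ℝ =>
      diag2n hij (Real.exp (s * Real.log c)) (Real.exp_ne_zero _) := by
    refine Continuous.subtype_mk (Continuous.matrix_diagonal (continuous_pi fun k => ?_)) _
    split_ifs <;> fun_prop (disch := intro; positivity)
  convert Joined.of_continuous hf using 1
  · apply Subtype.ext
    simp [diag2n_coe]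
  · simp [Real.exp_log hc]

-- The rotation by `π` in the `(i, j)`-plane is the square of the rotation by `π / 2`, which is a
-- product of three transvections.
theorem diag2n_neg_one_eq_sq {i j : ι} (hij : i ≠ j) :
    diag2n hij (-1 : ℝ) (by norm_num) =
      (transvection hij 1 * transvection hij.symm (-1) * transvection hij 1) ^ 2 := by
  apply Subtype.ext
  simp only [sq, coe_mul, transvection_coe, diag2n_coe, add_mul, mul_add, one_mul, mul_one,
    single_mul_single_same, single_mul_single_of_ne _ _ _ _ hij,
    single_mul_single_of_ne _ _ _ _ hij.symm, add_zero]
  ext a b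
  simp only [Matrix.add_apply, single_apply, one_apply, diagonal_apply]
  split_ifs <;> grind

theorem diag2n_mul_diag2n {i j : ι} (hij : i ≠ j) {a b : ℝ} (ha : a ≠ 0) (hb : b ≠ 0) :
    diag2n hij a ha * diag2n hij b hb = diag2n hij (a * b) (mul_ne_zero ha hb) := by
  apply Subtype.ext
  simp only [coe_mul, diag2n_coe, diagonal_mul_diagonal]
  congr 1
  funext k
  split_ifs <;> simp [mul_comm]

theorem joined_one_diag2n {i j : ι} (hij : i ≠ j) {c : ℝ} (hc : c ≠ 0) :
    Joined 1 (diag2n hij c hc) := by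
  rcases hc.lt_or_gt with hneg | hpos
  · set W := transvection hij (1 : ℝ) * transvection hij.symm (-1) * transvection hij 1
    have hW : Joined 1 W := by
      simpa using ((joined_one_transvection hij 1).mul
        (joined_one_transvection hij.symm (-1))).mul (joined_one_transvection hij 1)
    have hprod : W * W * diag2n hij (-c) (neg_ne_zero.2 hc) = diag2n hij c hc := by
      rw [← sq, ← diag2n_neg_one_eq_sq, diag2n_mul_diag2n]
      congr 1
      ring
    rw [← hprod]
    simpa using (hW.mul hW).mul (joined_one_diag2n_of_pos hij (neg_pos.2 hneg))
  · exact joined_one_diag2n_of_pos hij hpos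

instance pathConnectedSpace [Nontrivial ι] : PathConnectedSpace (SpecialLinearGroup ι ℝ) := by
  have h1 (A : SpecialLinearGroup ι ℝ) : Joined 1 A := by
    refine diagonal_transvection_induction' (Joined 1) A
      (fun i j hij c hc => joined_one_diag2n hij hc)
      (fun i j hij c => joined_one_transvection hij c) fun A B hA hB => ?_
    simpa using hA.mul hB
  exact ⟨⟨1⟩, fun A B => (h1 A).symm.trans (h1 B)⟩

end Matrix.SpecialLinearGroup

theorem Matrix.isPathConnected_setOf_det_pos {ι : Type*} [Fintype ι] [DecidableEq ι]
    [Nontrivial ι] : IsPathConnected {A : Matrix ι ι ℝ | 0 < A.det} := by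
  refine ⟨1, by simp, fun A hA => ?_⟩
  set r := A.det ^ ((Fintype.card ι : ℝ)⁻¹)
  have hr : 0 < r := Real.rpow_pos_of_pos hA _
  have hN : (r⁻¹ • A).det = 1 := by
    rw [det_smul, inv_pow, Real.rpow_inv_natCast_pow hA.le Fintype.card_ne_zero,
      inv_mul_cancel₀ hA.ne']
  have h1N : JoinedIn {A : Matrix ι ι ℝ | 0 < A.det} 1 (r⁻¹ • A) := by
    have hSL := isPathConnected_range (X := SpecialLinearGroup ι ℝ)
      (f := fun A => (A : Matrix ι ι ℝ)) (by fun_prop)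
    refine (hSL.joinedIn _ ⟨1, rfl⟩ _ ⟨⟨_, hN⟩, rfl⟩).mono ?_
    rintro _ ⟨B, rfl⟩
    simp
  have hNA : JoinedIn {A : Matrix ι ι ℝ | 0 < A.det} (r⁻¹ • A) A := by
    refine JoinedIn.ofLine (f := fun s : ℝ => Real.exp (s * Real.log r) • r⁻¹ • A)
      (by fun_prop) (by simp) (by simp [Real.exp_log hr, hr.ne']) ?_
    rintro _ ⟨s, -, rfl⟩
    change 0 < (Real.exp (s * Real.log r) • r⁻¹ • A).det
    rw [det_smul, hN]
    positivity
  exact h1N.trans hNA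

section LineDeriv

variable {E F : Type*} [AddCommGroup E] [Module ℝ E] [NormedAddCommGroup F] [NormedSpace ℝ F]
  {f : E → F}

theorem HasLineDerivAt.hasDerivAt_add_smul {f' : F} {x v : E} {t : ℝ}
    (h : HasLineDerivAt ℝ f f' (x + t • v) v) :
    HasDerivAt (fun s : ℝ => f (x + s • v)) f' t := by
  have h' : HasDerivAt (fun u : ℝ => f (x + t • v + u • v)) f' (t + -t) := by
    rwa [add_neg_cancel]
  convert h'.comp_add_const t (-t) using 2 with s
  congr 1
  module

theorem Convex.apply_eq_of_hasLineDerivAt_zero {s : Set E} (hs : Convex ℝ s)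
    (hf : ∀ x ∈ s, ∀ v, HasLineDerivAt ℝ f 0 x v) {x y : E} (hx : x ∈ s) (hy : y ∈ s) :
    f x = f y := by
  have hderiv (t : ℝ) (ht : t ∈ Set.Icc (0 : ℝ) 1) :
      HasDerivAt (fun t : ℝ => f (x + t • (y - x))) 0 t :=
    (hf _ (hs.add_smul_sub_mem hx hy ht) _).hasDerivAt_add_smul
  have := constant_of_has_deriv_right_zero
    (fun t ht => (hderiv t ht).continuousAt.continuousWithinAt)
    (fun t ht => (hderiv t (Set.Ico_subset_Icc_self ht)).hasDerivWithinAt) 1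
    (Set.right_mem_Icc.2 zero_le_one)
  simpa using this.symm

theorem IsOpen.apply_eq_of_hasLineDerivAt_zero [TopologicalSpace E] [LocallyConvexSpace ℝ E]
    {s : Set E} (hs : IsOpen s) (hs' : IsPreconnected s)
    (hf : ∀ x ∈ s, ∀ v, HasLineDerivAt ℝ f 0 x v) {x y : E} (hx : x ∈ s) (hy : y ∈ s) :
    f x = f y := by
  refine eq_of_germ_isConstant_on (fun z hz => ⟨f z, ?_⟩) hs' hx hy
  obtain ⟨U, ⟨hU, hUconv⟩, hUs⟩ :=
    (LocallyConvexSpace.convex_basis (𝕜 := ℝ) z).mem_iff.1 (hs.mem_nhds hz)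
  filter_upwards [hU] with w hw
  exact hUconv.apply_eq_of_hasLineDerivAt_zero (fun p hp => hf p (hUs hp)) hw (mem_of_mem_nhds hU)

end LineDeriv

theorem isOpen_GLpos : IsOpen GLpos :=
  isOpen_lt continuous_const continuous_id.matrix_det

theorem isPreconnected_GLpos : IsPreconnected GLpos :=
  (Matrix.isPathConnected_setOf_det_pos (ι := Fin 3)).isConnected.isPreconnected

theorem one_mem_GLpos : (1 : Matrix (Fin 3) (Fin 3) ℝ) ∈ GLpos := by
  simp [GLpos]

theorem mul_mem_GLpos {F G : Matrix (Fin 3) (Fin 3) ℝ} (hF : F ∈ GLpos) (hG : G ∈ GLpos) :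
    F * G ∈ GLpos := by
  simpa [GLpos, det_mul] using mul_pos hF hG

theorem det_smul_cauchy
    (P : Matrix (Fin 3) (Fin 3) ℝ → Matrix (Fin 3) (Fin 3) ℝ → Matrix (Fin 3) (Fin 3) ℝ)
    {F : Matrix (Fin 3) (Fin 3) ℝ} (hF : F.det ≠ 0) (S : Matrix (Fin 3) (Fin 3) ℝ) :
    F.det • cauchy P F S = P F S * Fᵀ := by
  rw [cauchy, smul_smul, mul_inv_cancel₀ hF, one_smul]

theorem piola_eq_of_cauchy_mul_eq
    {P : Matrix (Fin 3) (Fin 3) ℝ → Matrix (Fin 3) (Fin 3) ℝ → Matrix (Fin 3) (Fin 3) ℝ}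
    {F₁ F₂ S S' : Matrix (Fin 3) (Fin 3) ℝ} (hF₂ : F₂.det ≠ 0)
    (h : cauchy P (F₂ * F₁) S = cauchy P F₂ S') :
    P F₂ S' = F₁.det⁻¹ • (P (F₂ * F₁) S * F₁ᵀ) := by
  have hT : IsUnit F₂ᵀ := (isUnit_iff_isUnit_det _).2 (by simpa using hF₂.isUnit)
  rw [← hT.mul_left_inj, ← det_smul_cauchy P hF₂, ← h, cauchy, det_mul, transpose_mul, smul_smul,
    smul_mul, Matrix.mul_assoc, mul_inv, ← mul_assoc, mul_inv_cancel₀ hF₂, one_mul]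

theorem ISRI_stress_implies_energy_relation_general
    (ψ : Matrix (Fin 3) (Fin 3) ℝ → Matrix (Fin 3) (Fin 3) ℝ → ℝ)
    (P : Matrix (Fin 3) (Fin 3) ℝ → Matrix (Fin 3) (Fin 3) ℝ → Matrix (Fin 3) (Fin 3) ℝ)
    (hgrad : ∀ S : Matrix (Fin 3) (Fin 3) ℝ, ∀ F ∈ GLpos, ∀ H : Matrix (Fin 3) (Fin 3) ℝ,
      HasDerivAt (fun t : ℝ => ψ (F + t • H) S) (Matrix.trace ((P F S)ᵀ * H)) 0)
    (F₁ : Matrix (Fin 3) (Fin 3) ℝ) (hF₁ : F₁ ∈ GLpos)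
    (S : Matrix (Fin 3) (Fin 3) ℝ)
    (hISRI : ∀ F₂ ∈ GLpos, cauchy P (F₂ * F₁) S = cauchy P F₂ (cauchy P F₁ S)) :
    ∃ c : ℝ, ∀ F₂ ∈ GLpos,
      ψ (F₂ * F₁) S = F₁.det * ψ F₂ (cauchy P F₁ S) + c := by
  -- Not found by instance search through the `Matrix` type synonym.
  have : LocallyConvexSpace ℝ (Matrix (Fin 3) (Fin 3) ℝ) :=
    inferInstanceAs (LocallyConvexSpace ℝ (Fin 3 → Fin 3 → ℝ))
  set T₁ := cauchy P F₁ S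
  have hdefect (F₂ : Matrix (Fin 3) (Fin 3) ℝ) (hF₂ : F₂ ∈ GLpos) (H : Matrix (Fin 3) (Fin 3) ℝ) :
      HasLineDerivAt ℝ (fun F => ψ (F * F₁) S - F₁.det * ψ F T₁) 0 F₂ H := by
    have hψ₁ : HasDerivAt (fun t : ℝ => ψ ((F₂ + t • H) * F₁) S)
        (trace ((P (F₂ * F₁) S)ᵀ * (H * F₁))) 0 := by
      simpa only [add_mul, smul_mul] using hgrad S _ (mul_mem_GLpos hF₂ hF₁) (H * F₁)
    have hval : trace ((P (F₂ * F₁) S)ᵀ * (H * F₁)) - F₁.det * trace ((P F₂ T₁)ᵀ * H) = 0 := by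
      rw [piola_eq_of_cauchy_mul_eq (ne_of_gt hF₂) (hISRI F₂ hF₂), transpose_smul, transpose_mul,
        transpose_transpose, smul_mul, trace_smul, smul_eq_mul, mul_inv_cancel_left₀ hF₁.ne',
        Matrix.mul_assoc F₁, trace_mul_comm F₁, Matrix.mul_assoc, sub_self]
    show HasDerivAt (fun t : ℝ => ψ ((F₂ + t • H) * F₁) S - F₁.det * ψ (F₂ + t • H) T₁) 0 0
    exact hval ▸ hψ₁.sub ((hgrad T₁ F₂ hF₂ H).const_mul F₁.det)
  refine ⟨ψ (1 * F₁) S - F₁.det * ψ 1 T₁, fun F₂ hF₂ => ?_⟩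
  have := isOpen_GLpos.apply_eq_of_hasLineDerivAt_zero isPreconnected_GLpos hdefect hF₂
    one_mem_GLpos
  linarith

/-- If the ISRI condition holds at the level of the Cauchy stresses for a fixed `F₁ ∈ GL⁺`
and a fixed symmetric initial stress `S`, then the corresponding multiplicative relation
holds for the strain energy up to an additive constant. -/
theorem ISRI_stress_implies_energy_relation
    (ψ : Matrix (Fin 3) (Fin 3) ℝ → Matrix (Fin 3) (Fin 3) ℝ → ℝ)
    (P : Matrix (Fin 3) (Fin 3) ℝ → Matrix (Fin 3) (Fin 3) ℝ → Matrix (Fin 3) (Fin 3) ℝ)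
    (hgrad : ∀ S : Matrix (Fin 3) (Fin 3) ℝ, ∀ F ∈ GLpos, ∀ H : Matrix (Fin 3) (Fin 3) ℝ,
      HasDerivAt (fun t : ℝ => ψ (F + t • H) S) (Matrix.trace ((P F S)ᵀ * H)) 0)
    (hψcont : ∀ S : Matrix (Fin 3) (Fin 3) ℝ, ContinuousOn (fun F => ψ F S) GLpos)
    (hPcont : ∀ S : Matrix (Fin 3) (Fin 3) ℝ, ContinuousOn (fun F => P F S) GLpos)
    (F₁ : Matrix (Fin 3) (Fin 3) ℝ) (hF₁ : F₁ ∈ GLpos)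
    (S : Matrix (Fin 3) (Fin 3) ℝ) (hS : Sᵀ = S)
    (hISRI : ∀ F₂ ∈ GLpos, cauchy P (F₂ * F₁) S = cauchy P F₂ (cauchy P F₁ S)) :
    ∃ c : ℝ, ∀ F₂ ∈ GLpos,
      ψ (F₂ * F₁) S = F₁.det * ψ F₂ (cauchy P F₁ S) + c :=
  ISRI_stress_implies_energy_relation_general ψ P hgrad F₁ hF₁ S hISRI
end

section
/- Let ψ : GL⁺ × Sym(3) → ℝ be a strain energy with ψ(·;S) differentiable for every S, with Piola–Kirchhoff stress P(F;S) (the Frobenius gradient of ψ(·;S) at F) and Cauchy stress T(F;S) = (det F)⁻¹ P(F;S) Fᵀ. Assume ψ satisfies the initial stress reference independence (ISRI) condition: ψ(F₂F₁;S) = (det F₁)·ψ(F₂; T(F₁;S)) for all F₁, F₂ ∈ GL⁺ and all S ∈ Sym(3). Fix S ∈ Sym(3) and suppose Ĝ ∈ GL⁺ satisfies T(Ĝ;S) = 0. Then ψ(F;S) = (det Ĝ)·ψ(F Ĝ⁻¹; 0) for all F ∈ GL⁺, i.e. the initially stressed energy coincides with the energy of the relaxed material ψ₀ = ψ(·;0)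 evaluated on the elastic distortion F Ĝ⁻¹, weighted by det Ĝ. -/
open Matrix

theorem Matrix.det_mul_inv_pos {n : Type*} [Fintype n] [DecidableEq n] {F G : Matrix n n ℝ}
    (hF : 0 < F.det) (hG : 0 < G.det) : 0 < (F * G⁻¹).det := by
  rw [det_mul, det_nonsing_inv, Ring.inverse_eq_inv']
  positivity

theorem mul_inv_mem_GLpos {F G : Matrix (Fin 3) (Fin 3) ℝ} (hF : F ∈ GLpos) (hG : G ∈ GLpos) :
    F * G⁻¹ ∈ GLpos :=
  det_mul_inv_pos hF hG

theorem ISRI_energy_is_distortion_energy_general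
    (ψ : Matrix (Fin 3) (Fin 3) ℝ → Matrix (Fin 3) (Fin 3) ℝ → ℝ)
    (P : Matrix (Fin 3) (Fin 3) ℝ → Matrix (Fin 3) (Fin 3) ℝ → Matrix (Fin 3) (Fin 3) ℝ)
    (hISRI : ∀ F₁ ∈ GLpos, ∀ F₂ ∈ GLpos, ∀ S : Matrix (Fin 3) (Fin 3) ℝ, Sᵀ = S →
      ψ (F₂ * F₁) S = F₁.det * ψ F₂ (cauchy P F₁ S))
    (S : Matrix (Fin 3) (Fin 3) ℝ) (hS : Sᵀ = S)
    (G : Matrix (Fin 3) (Fin 3) ℝ) (hG : G ∈ GLpos)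
    (hrelax : cauchy P G S = 0) :
    ∀ F ∈ GLpos, ψ F S = G.det * ψ (F * G⁻¹) 0 := by
  intro F hF
  have hfactor := hISRI G hG (F * G⁻¹) (mul_inv_mem_GLpos hF hG) S hS
  rwa [nonsing_inv_mul_cancel_right G F (isUnit_iff_ne_zero.mpr (ne_of_gt hG)), hrelax]
    at hfactor

/-- If the strain energy satisfies the ISRI condition and `Ĝ ∈ GL⁺` is a relaxing
distortion for the symmetric initial stress `S` (i.e. `T(Ĝ;S) = 0`), then the initially
stressed energy coincides with the relaxed energy evaluated on the elastic distortion
`F Ĝ⁻¹`, weighted by `det Ĝ`. -/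
theorem ISRI_energy_is_distortion_energy
    (ψ : Matrix (Fin 3) (Fin 3) ℝ → Matrix (Fin 3) (Fin 3) ℝ → ℝ)
    (P : Matrix (Fin 3) (Fin 3) ℝ → Matrix (Fin 3) (Fin 3) ℝ → Matrix (Fin 3) (Fin 3) ℝ)
    (hgrad : ∀ S : Matrix (Fin 3) (Fin 3) ℝ, Sᵀ = S → ∀ F ∈ GLpos,
      ∀ H : Matrix (Fin 3) (Fin 3) ℝ,
      HasDerivAt (fun t : ℝ => ψ (F + t • H) S) (Matrix.trace ((P F S)ᵀ * H)) 0)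
    (hISRI : ∀ F₁ ∈ GLpos, ∀ F₂ ∈ GLpos, ∀ S : Matrix (Fin 3) (Fin 3) ℝ, Sᵀ = S →
      ψ (F₂ * F₁) S = F₁.det * ψ F₂ (cauchy P F₁ S))
    (S : Matrix (Fin 3) (Fin 3) ℝ) (hS : Sᵀ = S)
    (G : Matrix (Fin 3) (Fin 3) ℝ) (hG : G ∈ GLpos)
    (hrelax : cauchy P G S = 0) :
    ∀ F ∈ GLpos, ψ F S = G.det * ψ (F * G⁻¹) 0 :=
  ISRI_energy_is_distortion_energy_general ψ P hISRI S hS G hG hrelax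
end
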